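/- Let p be a prime and n ≥ 2 an integer. Define, for a nonzero complex number x, the 2×2n matrix A'_{2,2n}(x) := B'_{2,2n}(p^{3/2−n}x, p^{5/2−n}x, …, p^{n−3/2}x), i.e. with l-th argument p^{l−1/2−n}·x for l = 2, …, 2n−1 (here p^{r} for half-integral r denotes the positive real power). Then A'_{2,2n}(x) = A'_{2,2n}(x^{−1}) for every nonzero complex number x. -/

import Mathlib

open Matrix

noncomputable section

/-- The coefficient `b_{t,j,l,p}(X)`. -/
def bcoef (p l t j : ℕ) (X : ℂ) : ℂ :=
  if t + 2 = j then ((p : ℂ) ^ ((2 * l : ℤ) - 2 * j + 2) - 1) * (p : ℂ) ^ ((j : ℤ) - 1 - l) * X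
  else if t + 1 = j then 1 + (p : ℂ) ^ ((j : ℤ) - 1 - l) * ((p : ℂ) - 1) * X + X ^ 2
  else if t = j then (p : ℂ) ^ ((j : ℤ) - l) * X
  else 0

/-- The `l × (l+1)` matrix `B_{l,l+1}(X) = (b_{t,j,l,p}(X))_{0≤t≤l−1, 0≤j≤l}`. -/
def Bmat (p l : ℕ) (X : ℂ) : Matrix (Fin l) (Fin (l + 1)) ℂ :=
  Matrix.of fun t j => bcoef p l (t : ℕ) (j : ℕ) X

/-- Auxiliary product: `BprodAux p X m = B_{2,3}(X 2) * B_{3,4}(X 3) * ⋯ * B_{m+2,m+3}(X (m+2))`,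
a `2 × (m+3)` matrix; thus `BprodAux p X (2n−3) = B_{2,2n}(X_2,…,X_{2n−1})` for `n ≥ 2`. -/
def BprodAux (p : ℕ) (X : ℕ → ℂ) : (m : ℕ) → Matrix (Fin 2) (Fin (m + 3)) ℂ
  | 0 => Bmat p 2 (X 2)
  | m + 1 => BprodAux p X m * Bmat p (m + 3) (X (m + 3))

/-- `B'_{2,2n}(X_2,…,X_{2n−1}) = (∏_{i=2}^{2n−1} X_i)⁻¹ · B_{2,2n}(X_2,…,X_{2n−1})`. -/
def Bprime (p n : ℕ) (X : ℕ → ℂ) : Matrix (Fin 2) (Fin (2 * n - 3 + 3)) ℂ :=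
  (∏ i ∈ Finset.Icc 2 (2 * n - 1), X i)⁻¹ • BprodAux p X (2 * n - 3)

/-- `A'_{2,2n}(x) = B'_{2,2n}(p^{3/2−n}x, p^{5/2−n}x, …, p^{n−3/2}x)`, the `l`-th
argument being `p^{l−1/2−n}·x` (real power of `p`). -/
def Aprime (p n : ℕ) (x : ℂ) : Matrix (Fin 2) (Fin (2 * n - 3 + 3)) ℂ :=
  Bprime p n fun l => (((p : ℝ) ^ ((l : ℝ) - 1 / 2 - (n : ℝ)) : ℝ) : ℂ) * x

/-! Two properties of the factors `B_{l,l+1}` give the symmetry. Consecutive factors may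
exchange their arguments, `B_{l,l+1}(X) B_{l+1,l+2}(Y) = B_{l,l+1}(Y) B_{l+1,l+2}(X)`, so
`B_{2,2n}` is unchanged when its arguments are read backwards. Every entry of `B_{l,l+1}(X)` is
`X` times a function invariant under `X ↦ X⁻¹`, so `B_{l,l+1}(X⁻¹) = X⁻² B_{l,l+1}(X)`. Since
`p^{l-1/2-n} x⁻¹ = (p^{(2n+1-l)-1/2-n} x)⁻¹`, the arguments of `A'_{2,2n}(x⁻¹)` are the inverses
of those of `A'_{2,2n}(x)` in reverse order; the factor `(∏ X_l)⁻²` produced by the inversion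
cancels against the normalisation of `B'`. -/

lemma bcoef_eq_zero_of_lt_or_lt (p l t j : ℕ) (X : ℂ) (htj : t + 2 < j ∨ j < t) :
    bcoef p l t j X = 0 := by
  unfold bcoef
  rw [if_neg (by omega), if_neg (by omega), if_neg (by omega)]

-- Past the last column of `B_{l,l+1}` only `j = l + 1 = t + 2` lies in the band, and there the
-- coefficient is `p ^ 0 - 1 = 0`.
lemma bcoef_eq_zero_of_lt_of_lt (p l t j : ℕ) (X : ℂ) (ht : t < l) (hj : l < j) :
    bcoef p l t j X = 0 := by
  by_cases h : t + 2 = j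
  · rw [bcoef, if_pos h, show (2 * l : ℤ) - 2 * j + 2 = 0 by omega, zpow_zero, sub_self,
      zero_mul, zero_mul]
  · exact bcoef_eq_zero_of_lt_or_lt p l t j X (by omega)

lemma Bmat_mul_Bmat_apply (p l : ℕ) (X Y : ℂ) (t : Fin l) (j : Fin (l + 1 + 1)) :
    (Bmat p l X * Bmat p (l + 1) Y) t j =
      ∑ k ∈ Finset.range 3, bcoef p l t (t + k) X * bcoef p (l + 1) (t + k) j Y := by
  set f : ℕ → ℂ := fun k => bcoef p l t k X * bcoef p (l + 1) k j Y
  have ht : (t : ℕ) < l := t.isLt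
  calc (Bmat p l X * Bmat p (l + 1) Y) t j = ∑ k ∈ Finset.range (l + 1), f k := by
        simp only [mul_apply, Bmat, of_apply]
        exact Fin.sum_univ_eq_sum_range f (l + 1)
    _ = ∑ k ∈ Finset.range (l + 3), f k := by
        refine Finset.sum_subset (Finset.range_subset_range.2 (by omega)) fun k hk hk' => ?_
        simp only [Finset.mem_range] at hk hk'
        simp only [f, bcoef_eq_zero_of_lt_of_lt p l t k X ht (by omega), zero_mul]
    _ = ∑ k ∈ Finset.Ico (t : ℕ) (t + 3), f k := by
        refine (Finset.sum_subset (fun k hk => ?_) fun k hk hk' => ?_).symm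
        · simp only [Finset.mem_Ico, Finset.mem_range] at hk ⊢; omega
        · simp only [Finset.mem_Ico, Finset.mem_range] at hk hk'
          simp only [f, bcoef_eq_zero_of_lt_or_lt p l t k X (by omega), zero_mul]
    _ = _ := by rw [Finset.sum_Ico_eq_sum_range, add_tsub_cancel_left]

-- A case check on `j - t ∈ {0, …, 4}`, each case a polynomial identity in `X`, `Y`, powers of `p`.
lemma sum_bcoef_mul_bcoef_comm (p l t j : ℕ) (X Y : ℂ) :
    ∑ k ∈ Finset.range 3, bcoef p l t (t + k) X * bcoef p (l + 1) (t + k) j Y =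
      ∑ k ∈ Finset.range 3, bcoef p l t (t + k) Y * bcoef p (l + 1) (t + k) j X := by
  simp only [Finset.sum_range_succ, Finset.sum_range_zero, bcoef]
  split_ifs <;> first | omega | (subst_vars; push_cast; ring_nf)

lemma Bmat_mul_Bmat_comm (p l : ℕ) (X Y : ℂ) :
    Bmat p l X * Bmat p (l + 1) Y = Bmat p l Y * Bmat p (l + 1) X := by
  ext t j
  rw [Bmat_mul_Bmat_apply, Bmat_mul_Bmat_apply, sum_bcoef_mul_bcoef_comm]

lemma bcoef_inv (p l t j : ℕ) {X : ℂ} (hX : X ≠ 0) :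
    bcoef p l t j X⁻¹ = (X ^ 2)⁻¹ * bcoef p l t j X := by
  unfold bcoef
  split_ifs <;> field_simp <;> ring

lemma Bmat_inv (p l : ℕ) {X : ℂ} (hX : X ≠ 0) : Bmat p l X⁻¹ = (X ^ 2)⁻¹ • Bmat p l X := by
  ext t j
  exact bcoef_inv p l t j hX

lemma BprodAux_congr (p : ℕ) {X Y : ℕ → ℂ} :
    ∀ {m : ℕ}, (∀ l ∈ Finset.Icc 2 (m + 2), X l = Y l) → BprodAux p X m = BprodAux p Y m
  | 0, h => by rw [BprodAux, BprodAux, h 2 (by simp)]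
  | m + 1, h => by
    rw [BprodAux, BprodAux, h (m + 3) (by simp),
      BprodAux_congr p fun l hl => h l (Finset.Icc_subset_Icc_right (by omega) hl)]

lemma BprodAux_mul_Bmat (p : ℕ) (X : ℕ → ℂ) (Y : ℂ) :
    ∀ m : ℕ, BprodAux p X m * Bmat p (m + 3) Y =
      BprodAux p (fun l => if l = 2 then Y else X (l - 1)) (m + 1)
  | 0 => by simp only [BprodAux, Bmat_mul_Bmat_comm p 2 (X 2) Y]; rfl
  | m + 1 => by
    rw [BprodAux, Matrix.mul_assoc, Bmat_mul_Bmat_comm, ← Matrix.mul_assoc,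
      BprodAux_mul_Bmat p X Y m]
    rfl

lemma BprodAux_reflect (p : ℕ) :
    ∀ (m : ℕ) (X : ℕ → ℂ), BprodAux p (fun l => X (m + 4 - l)) m = BprodAux p X m
  | 0, X => rfl
  | m + 1, X => by
    calc BprodAux p (fun l => X (m + 1 + 4 - l)) (m + 1)
        = BprodAux p (fun l => if l = 2 then X (m + 3) else X (m + 4 - (l - 1))) (m + 1) := by
          refine BprodAux_congr p fun l hl => ?_
          simp only [Finset.mem_Icc] at hl
          split_ifs <;> congr 1 <;> omega
      _ = BprodAux p (fun l => X (m + 4 - l)) m * Bmat p (m + 3) (X (m + 3)) :=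
          (BprodAux_mul_Bmat p (fun l => X (m + 4 - l)) (X (m + 3)) m).symm
      _ = BprodAux p X (m + 1) := by rw [BprodAux_reflect p m X]; rfl

lemma BprodAux_inv (p : ℕ) {X : ℕ → ℂ} (hX : ∀ l, X l ≠ 0) :
    ∀ m : ℕ, BprodAux p (fun l => (X l)⁻¹) m =
      ((∏ l ∈ Finset.Icc 2 (m + 2), X l) ^ 2)⁻¹ • BprodAux p X m
  | 0 => by simpa [BprodAux] using Bmat_inv p 2 (hX 2)
  | m + 1 => by
    rw [BprodAux, BprodAux, BprodAux_inv p hX m, Bmat_inv p (m + 3) (hX (m + 3)),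
      Matrix.smul_mul, Matrix.mul_smul, smul_smul]
    congr 1
    rw [show m + 1 + 2 = m + 2 + 1 from rfl,
      Finset.prod_Icc_succ_top (show 2 ≤ m + 2 + 1 by omega)]
    ring

lemma prod_Icc_reflect {M : Type*} [CommMonoid M] (f : ℕ → M) (a b : ℕ) :
    ∏ l ∈ Finset.Icc a b, f (a + b - l) = ∏ l ∈ Finset.Icc a b, f l := by
  refine Finset.prod_nbij' (a + b - ·) (a + b - ·) ?_ ?_ ?_ ?_ ?_ <;>
    intro l hl <;> simp only [Finset.mem_Icc] at * <;> omega

lemma Bprime_eq_of_reflect (p : ℕ) {n : ℕ} (hn : 2 ≤ n) {X Y : ℕ → ℂ} (hX : ∀ l, X l ≠ 0)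
    (hY : ∀ l ∈ Finset.Icc 2 (2 * n - 1), Y l = (X (2 * n + 1 - l))⁻¹) :
    Bprime p n Y = Bprime p n X := by
  have hm : 2 * n - 3 + 2 = 2 * n - 1 := by omega
  set P := ∏ l ∈ Finset.Icc 2 (2 * n - 1), X l with hPdef
  have hP : ∏ l ∈ Finset.Icc 2 (2 * n - 1), X (2 * n + 1 - l) = P := by
    rw [show 2 * n + 1 = 2 + (2 * n - 1) by omega]
    exact prod_Icc_reflect X 2 (2 * n - 1)
  have hprodY : ∏ l ∈ Finset.Icc 2 (2 * n - 1), Y l = P⁻¹ := by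
    rw [Finset.prod_congr rfl hY, Finset.prod_inv_distrib, hP]
  have hBY : BprodAux p Y (2 * n - 3) = (P ^ 2)⁻¹ • BprodAux p X (2 * n - 3) := by
    rw [BprodAux_congr p (Y := fun l => (X (2 * n + 1 - l))⁻¹) (hm ▸ hY),
      BprodAux_inv p (fun l => hX _), hm, hP, ← BprodAux_reflect p (2 * n - 3) X,
      show 2 * n - 3 + 4 = 2 * n + 1 by omega]
  have hP0 : P ≠ 0 := Finset.prod_ne_zero_iff.mpr fun l _ => hX l
  rw [Bprime, Bprime, ← hPdef, hprodY, hBY, smul_smul]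
  congr 1
  field_simp

/-- for a prime `p` and `n ≥ 2`, `A'_{2,2n}(x) = A'_{2,2n}(x⁻¹)` for every
nonzero complex number `x`. -/
theorem statement13 (p n : ℕ) (hp : p.Prime) (hn : 2 ≤ n) (x : ℂ) (hx : x ≠ 0) :
    Aprime p n x = Aprime p n x⁻¹ := by
  set c : ℕ → ℝ := fun l => (p : ℝ) ^ ((l : ℝ) - 1 / 2 - (n : ℝ))
  have hp0 : (0 : ℝ) < p := by exact_mod_cast hp.pos
  have hc : ∀ l ≤ 2 * n + 1, c (2 * n + 1 - l) = (c l)⁻¹ := fun l hl => by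
    simp only [c, ← Real.rpow_neg hp0.le]
    congr 1
    push_cast [Nat.cast_sub hl]
    ring
  refine (Bprime_eq_of_reflect p hn (fun l => mul_ne_zero ?_ hx) fun l hl => ?_).symm
  · exact Complex.ofReal_ne_zero.mpr (Real.rpow_pos_of_pos hp0 _).ne'
  · simp only [Finset.mem_Icc] at hl
    show (c l : ℂ) * x⁻¹ = ((c (2 * n + 1 - l) : ℂ) * x)⁻¹
    rw [hc l (by omega), Complex.ofReal_inv, mul_inv, inv_inv]

end
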